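/- arXiv:1604.07147 — 2 statements merged into one kernel-verified Lean document; each statement's English description precedes it below -/
import Mathlib

section
/- For any a ∈ T₂(ℂ), the square D_a² of the inner derivation D_a(x) = ax − xa on T₂(ℂ) is itself an inner derivation of T₂(ℂ); explicitly, D_a² = D_b where b is the upper triangular matrix with entries b₁₁ = a₁₁² + a₂₂², b₁₂ = (a₁₁ − a₂₂)a₁₂, b₂₂ = 2a₁₁a₂₂. -/
open Matrix

def T2 : Subalgebra ℂ (Matrix (Fin 2) (Fin 2) ℂ) where
  carrier := {x | x 1 0 = 0}
  mul_mem' := by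
    intro a b ha hb
    simp only [Set.mem_setOf_eq] at *
    simp [Matrix.mul_apply, Fin.sum_univ_two, ha, hb]
  add_mem' := by
    intro a b ha hb
    simp only [Set.mem_setOf_eq] at *
    simp [ha, hb]
  algebraMap_mem' := by
    intro r
    simp [Matrix.algebraMap_matrix_apply]

/-! For upper triangular `a` and `x` the commutator `a x - x a` has zero diagonal, so it is a
multiple of the matrix unit `e₁₂`, on which `D_a` acts as multiplication by `a₁₁ - a₂₂`. Hence
`D_a² = (a₁₁ - a₂₂) D_a`, and the `b` of the statement is `(a₁₁ - a₂₂) a` plus the scalar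
`a₂₂² + a₁₁ a₂₂`, which does not change the inner derivation. -/

section UpperTriangular

variable {R : Type*} [CommRing R]

theorem Matrix.fin_two_commutator_apply_one_zero {a x : Matrix (Fin 2) (Fin 2) R}
    (ha : a 1 0 = 0) (hx : x 1 0 = 0) : (a * x - x * a) 1 0 = 0 := by
  simp [Matrix.mul_apply, Fin.sum_univ_two, ha, hx]

theorem Matrix.fin_two_commutator_apply_self {a x : Matrix (Fin 2) (Fin 2) R}
    (ha : a 1 0 = 0) (hx : x 1 0 = 0) (i : Fin 2) : (a * x - x * a) i i = 0 := by
  fin_cases i <;> simp [Matrix.mul_apply, Fin.sum_univ_two, ha, hx] <;> ring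

theorem Matrix.fin_two_commutator_eq_smul_of_strictUpper {a y : Matrix (Fin 2) (Fin 2) R}
    (ha : a 1 0 = 0) (hy : y 1 0 = 0) (hy_diag : ∀ i, y i i = 0) :
    a * y - y * a = (a 0 0 - a 1 1) • y := by
  ext i j
  fin_cases i <;> fin_cases j <;> simp [Matrix.mul_apply, Fin.sum_univ_two, ha, hy, hy_diag]
  ring

theorem Matrix.fin_two_commutator_commutator {a x : Matrix (Fin 2) (Fin 2) R}
    (ha : a 1 0 = 0) (hx : x 1 0 = 0) :
    a * (a * x - x * a) - (a * x - x * a) * a = (a 0 0 - a 1 1) • (a * x - x * a) :=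
  fin_two_commutator_eq_smul_of_strictUpper ha (fin_two_commutator_apply_one_zero ha hx)
    (fin_two_commutator_apply_self ha hx)

end UpperTriangular

theorem commutator_smul_add_algebraMap {R A : Type*} [CommSemiring R] [Ring A] [Algebra R A]
    (c r : R) (a x : A) :
    (c • a + algebraMap R A r) * x - x * (c • a + algebraMap R A r) = c • (a * x - x * a) := by
  rw [add_mul, mul_add, Algebra.commutes, smul_mul_assoc, mul_smul_comm, smul_sub]
  abel

/-- The square of the inner derivation D_a on T₂(ℂ) is the inner derivation
D_b where b₁₁ = a₁₁² + a₂₂², b₁₂ = (a₁₁ − a₂₂)a₁₂, b₂₂ = 2a₁₁a₂₂. -/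
theorem inner_derivation_T2_sq_inner (a : T2) :
    ∃ b : T2,
      (b : Matrix (Fin 2) (Fin 2) ℂ) 0 0 =
        (a : Matrix (Fin 2) (Fin 2) ℂ) 0 0 ^ 2 +
          (a : Matrix (Fin 2) (Fin 2) ℂ) 1 1 ^ 2 ∧
      (b : Matrix (Fin 2) (Fin 2) ℂ) 0 1 =
        ((a : Matrix (Fin 2) (Fin 2) ℂ) 0 0 -
          (a : Matrix (Fin 2) (Fin 2) ℂ) 1 1) *
          (a : Matrix (Fin 2) (Fin 2) ℂ) 0 1 ∧
      (b : Matrix (Fin 2) (Fin 2) ℂ) 1 1 =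
        2 * (a : Matrix (Fin 2) (Fin 2) ℂ) 0 0 *
          (a : Matrix (Fin 2) (Fin 2) ℂ) 1 1 ∧
      ∀ x : T2, a * (a * x - x * a) - (a * x - x * a) * a = b * x - x * b := by
  obtain ⟨A, hA⟩ := a
  let c := A 0 0 - A 1 1
  let r := A 1 1 ^ 2 + A 0 0 * A 1 1
  have hb : ((c • ⟨A, hA⟩ + algebraMap ℂ T2 r : T2) : Matrix (Fin 2) (Fin 2) ℂ) =
      c • A + Matrix.diagonal (fun _ ↦ r) := rfl
  refine ⟨c • ⟨A, hA⟩ + algebraMap ℂ T2 r, ?_, ?_, ?_, ?_⟩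
  · rw [hb]; simp [c, r]; ring
  · rw [hb]; simp [c]
  · rw [hb]; simp [c, r]; ring
  rintro ⟨X, hX⟩
  rw [commutator_smul_add_algebraMap]
  exact Subtype.ext (Matrix.fin_two_commutator_commutator hA hX)
end

section
/- The square of every derivation on T₂(ℂ) is again a derivation on T₂(ℂ), although T₂(ℂ) is noncommutative. -/
open Matrix

/-!
A derivation `D` of `T₂(ℂ)` takes values in the strictly upper triangular matrices: composed with
the diagonal character `T₂(ℂ) → ℂ × ℂ` it kills every idempotent, and `T₂(ℂ)` is spanned by
idempotents. Strictly upper triangular `2 × 2` matrices multiply to zero, so the cross terms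
`2 D x D y` in `D² (x y) = D² x y + 2 D x D y + x D² y` vanish.
-/

section Leibniz

variable {A F : Type*} [FunLike F A A]

theorem leibniz_sq_of_mul_eq_zero [NonUnitalNonAssocSemiring A] [AddHomClass F A A] (D : F)
    (hD : ∀ x y : A, D (x * y) = D x * y + x * D y)
    (hD₀ : ∀ x y : A, D x * D y = 0) (x y : A) :
    D (D (x * y)) = D (D x) * y + x * D (D y) := by
  rw [hD, map_add, hD, hD, hD₀, add_zero, zero_add]

theorem RingHom.map_apply_eq_zero_of_isIdempotentElem {B : Type*} [Semiring A] [CommRing B]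
    (χ : A →+* B) (D : F)
    (hD : ∀ x y : A, D (x * y) = D x * y + x * D y) {e : A} (he : IsIdempotentElem e) :
    χ (D e) = 0 := by
  have hχe : χ e * χ e = χ e := by rw [← map_mul, he.eq]
  have h : χ (D e) = 2 * χ e * χ (D e) := by
    conv_lhs => rw [← he.eq, hD, map_add, map_mul, map_mul]
    ring
  -- `1 - 2 χ e` squares to `1`
  linear_combination (1 - 2 * χ e) * h - 4 * χ (D e) * hχe

end Leibniz

theorem AlgHom.map_apply_eq_zero_of_span_isIdempotentElem {R A B : Type*} [CommSemiring R]
    [Semiring A] [Algebra R A] [CommRing B] [Algebra R B]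
    (hA : Submodule.span R {e : A | IsIdempotentElem e} = ⊤) (χ : A →ₐ[R] B) (D : A →ₗ[R] A)
    (hD : ∀ x y : A, D (x * y) = D x * y + x * D y) (x : A) :
    χ (D x) = 0 := by
  have : χ.toLinearMap ∘ₗ D = 0 :=
    LinearMap.ext_on hA fun e he => (χ : A →+* B).map_apply_eq_zero_of_isIdempotentElem D hD he
  exact LinearMap.congr_fun this x

namespace T2

def mk (a b d : ℂ) : T2 := ⟨!![a, b; 0, d], rfl⟩

def diag : T2 →ₐ[ℂ] ℂ × ℂ where
  toFun x := ((x : Matrix (Fin 2) (Fin 2) ℂ) 0 0, (x : Matrix (Fin 2) (Fin 2) ℂ) 1 1)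
  map_one' := by simp
  map_mul' x y := by
    have hy : (y : Matrix (Fin 2) (Fin 2) ℂ) 1 0 = 0 := y.2
    have hx : (x : Matrix (Fin 2) (Fin 2) ℂ) 1 0 = 0 := x.2
    simp [Matrix.mul_apply, Fin.sum_univ_two, hx, hy]
  map_zero' := by simp
  map_add' x y := by simp
  commutes' r := by simp [Matrix.algebraMap_matrix_apply]

theorem mk_zero : mk 0 0 0 = 0 := by
  ext i j; fin_cases i <;> fin_cases j <;> rfl

theorem mk_mul_mk (a b d a' b' d' : ℂ) :
    mk a b d * mk a' b' d' = mk (a * a') (a * b' + b * d') (d * d') := by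
  ext i j; fin_cases i <;> fin_cases j <;> simp [mk, Matrix.mul_apply, Fin.sum_univ_two]

theorem eq_mk (x : T2) :
    x = mk ((x : Matrix (Fin 2) (Fin 2) ℂ) 0 0) ((x : Matrix (Fin 2) (Fin 2) ℂ) 0 1)
      ((x : Matrix (Fin 2) (Fin 2) ℂ) 1 1) := by
  have hx : (x : Matrix (Fin 2) (Fin 2) ℂ) 1 0 = 0 := x.2
  ext i j; fin_cases i <;> fin_cases j <;> simp [mk, hx]

theorem diag_apply (x : T2) :
    diag x = ((x : Matrix (Fin 2) (Fin 2) ℂ) 0 0, (x : Matrix (Fin 2) (Fin 2) ℂ) 1 1) :=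
  rfl

theorem span_isIdempotentElem : Submodule.span ℂ {e : T2 | IsIdempotentElem e} = ⊤ := by
  refine eq_top_iff.2 fun x _ => ?_
  obtain ⟨a, b, d, rfl⟩ : ∃ a b d, x = mk a b d := ⟨_, _, _, eq_mk x⟩
  have hx : mk a b d = (a - b) • mk 1 0 0 + b • mk 1 1 0 + d • mk 0 0 1 := by
    ext i j; fin_cases i <;> fin_cases j <;> simp [mk]
  have hmem : ∀ {a b d : ℂ}, IsIdempotentElem (mk a b d) →
      mk a b d ∈ Submodule.span ℂ {e : T2 | IsIdempotentElem e} :=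
    fun he => Submodule.subset_span he
  rw [hx]
  refine add_mem (add_mem (Submodule.smul_mem _ _ (hmem ?_)) (Submodule.smul_mem _ _ (hmem ?_)))
    (Submodule.smul_mem _ _ (hmem ?_)) <;>
  simp [IsIdempotentElem, mk_mul_mk]

theorem mul_eq_zero_of_diag_eq_zero {x y : T2} (hx : diag x = 0) (hy : diag y = 0) :
    x * y = 0 := by
  rw [eq_mk x, eq_mk y, mk_mul_mk]
  rw [diag_apply, Prod.mk_eq_zero] at hx hy
  simp [hx, hy, mk_zero]

end T2

/-- The square of every derivation on T₂(ℂ) is again a derivation, although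
T₂(ℂ) is noncommutative. -/
theorem derivation_T2_sq_derivation :
    (∀ D : T2 →ₗ[ℂ] T2,
      (∀ x y : T2, D (x * y) = D x * y + x * D y) →
      ∀ x y : T2, D (D (x * y)) = D (D x) * y + x * D (D y)) ∧
    ¬ (∀ x y : T2, x * y = y * x) := by
  refine ⟨fun D hD => leibniz_sq_of_mul_eq_zero D hD fun x y => ?_, fun h => ?_⟩
  · exact T2.mul_eq_zero_of_diag_eq_zero
      (T2.diag.map_apply_eq_zero_of_span_isIdempotentElem T2.span_isIdempotentElem D hD x)
      (T2.diag.map_apply_eq_zero_of_span_isIdempotentElem T2.span_isIdempotentElem D hD y)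
  · have h01 := congrArg (fun x : T2 => (x : Matrix (Fin 2) (Fin 2) ℂ) 0 1)
      (h (T2.mk 1 0 0) (T2.mk 0 1 0))
    simp [T2.mk] at h01
end
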